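/- Let f : (0,∞) → ℝ be non-decreasing and concave, p̂ ∈ Δ(V) with p̂_1 ≥ … ≥ p̂_d > 0, and 0 < ε < p̂_d. Write g⁻(x) = f(x) − f(x − ε), g⁺(x) = f(x + ε) − f(x), and for q ∈ Δ(V) let Φ(q) = −Σ_i q_i f(p̂_i) + max_{i ≠ j} { q_i g⁻(p̂_i) − q_j g⁺(p̂_j) }. If q↓ denotes the decreasing rearrangement of q (so q↓_1 ≥ … ≥ q↓_d), then Φ(q↓) ≤ Φ(q). Consequently, the minimization of Φ over Δ(V) admits a minimizer whose entries are sorted in decreasing order. -/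

import Mathlib

open Finset

/-!
Sorting `q` decreasingly can only lower the linear part `-Σ qᵢ f(p̂ᵢ)` of `Φ`, by the rearrangement
inequality, because `f(p̂ᵢ)` decreases in `i`. For the pair part, concavity makes both increments
`g⁻(p̂ᵢ)` and `g⁺(p̂ᵢ)` increase in `i`. If `q ∘ σ` is sorted, then for each pair `i ≠ j` pigeonhole
gives `m₁ ≤ i ≤ σ m₁` and `σ m₂ ≤ j ≤ m₂`, and the term of `q` at the pair `(σ m₁, σ m₂)` dominates
the term of `q ∘ σ` at `(i, j)`. A minimizer of the continuous `Φ` on the compact simplex exists, and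
sorting it keeps it a minimizer.
-/

def simplex (d : ℕ) : Set (Fin d → ℝ) := {p | (∀ i, 0 ≤ p i) ∧ ∑ i, p i = 1}

/-- The regularized objective
`Φ(q) = −Σ_i q_i f(p̂_i) + max_{i ≠ j} { q_i g⁻(p̂_i) − q_j g⁺(p̂_j) }`. -/
noncomputable def Phi {d : ℕ} (f : ℝ → ℝ) (phat : Fin d → ℝ) (ε : ℝ) (q : Fin d → ℝ) : ℝ :=
  -(∑ i, q i * f (phat i))
    + sSup {x : ℝ | ∃ i j : Fin d, i ≠ j ∧
        x = q i * (f (phat i) - f (phat i - ε)) - q j * (f (phat j + ε) - f (phat j))}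

theorem ConcaveOn.add_sub_le_add_sub_of_le {s : Set ℝ} {f : ℝ → ℝ} (hf : ConcaveOn ℝ s f)
    {x y h : ℝ} (hx : x ∈ s) (hyh : y + h ∈ s) (hxy : x ≤ y) (hh : 0 ≤ h) :
    f (y + h) - f y ≤ f (x + h) - f x := by
  rcases (sub_nonneg.2 (le_add_of_le_of_nonneg hxy hh) : 0 ≤ y + h - x).eq_or_lt with hD | hD
  · obtain rfl : h = 0 := by linarith
    simp
  -- `x + h` and `y` are the convex combinations of `x` and `y + h` with swapped weights
  have hw₁ : 0 ≤ (y - x) / (y + h - x) := div_nonneg (by linarith) hD.le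
  have hw₂ : 0 ≤ h / (y + h - x) := div_nonneg hh hD.le
  have hsum : (y - x) / (y + h - x) + h / (y + h - x) = 1 := by field_simp; ring
  have hxh := hf.2 hx hyh hw₁ hw₂ hsum
  have hy := hf.2 hx hyh hw₂ hw₁ (by linarith)
  simp only [smul_eq_mul] at hxh hy
  have exh : (y - x) / (y + h - x) * x + h / (y + h - x) * (y + h) = x + h := by
    field_simp; ring
  have ey : h / (y + h - x) * x + (y - x) / (y + h - x) * (y + h) = y := by
    field_simp; ring
  rw [exh] at hxh
  rw [ey] at hy
  linear_combination hxh + hy - (f x + f (y + h)) * hsum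

namespace Equiv.Perm

variable {α : Type*} [LinearOrder α] [Fintype α]

theorem exists_le_le_apply (σ : Perm α) (i : α) : ∃ m ≤ i, i ≤ σ m := by
  by_contra! h
  have hmaps : ((univ.filter (· ≤ i)).map σ.toEmbedding) ⊆ univ.filter (· < i) := by
    intro x hx
    obtain ⟨m, hm, rfl⟩ := mem_map.1 hx
    simpa using h m (by simpa using hm)
  have hssub : univ.filter (· < i) ⊂ univ.filter (· ≤ i) :=
    ssubset_iff_of_subset (monotone_filter_right _ fun _ _ => le_of_lt) |>.2
      ⟨i, by simp, by simp⟩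
  have := (card_le_card hmaps).trans_lt (card_lt_card hssub)
  simp at this

theorem exists_le_apply_le (σ : Perm α) (i : α) : ∃ m, i ≤ m ∧ σ m ≤ i := by
  obtain ⟨m, hmi, him⟩ := σ⁻¹.exists_le_le_apply i
  exact ⟨σ⁻¹ m, him, by simpa using hmi⟩

end Equiv.Perm

theorem Finset.univ_offDiag_nonempty {α : Type*} [Fintype α] [DecidableEq α] [Nontrivial α] :
    (univ.offDiag : Finset (α × α)).Nonempty := by
  obtain ⟨i, j, hij⟩ := exists_pair_ne α
  exact ⟨(i, j), mem_offDiag.2 ⟨mem_univ i, mem_univ j, hij⟩⟩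

section offDiagSup

variable {ι : Type*}

noncomputable def offDiagSup (F : ι → ι → ℝ) : ℝ :=
  sSup {x : ℝ | ∃ i j : ι, i ≠ j ∧ x = F i j}

theorem offDiagSup_of_subsingleton [Subsingleton ι] (F : ι → ι → ℝ) : offDiagSup F = 0 := by
  have : {x : ℝ | ∃ i j : ι, i ≠ j ∧ x = F i j} = ∅ := by
    ext x
    simp
  rw [offDiagSup, this, Real.sSup_empty]

theorem offDiagSup_eq_sup' [Fintype ι] [DecidableEq ι] (F : ι → ι → ℝ)
    (h : (univ.offDiag : Finset (ι × ι)).Nonempty) :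
    offDiagSup F = univ.offDiag.sup' h fun p => F p.1 p.2 := by
  rw [sup'_eq_csSup_image, offDiagSup]
  congr 1
  ext x
  simp [eq_comm]

theorem offDiagSup_le_offDiagSup [Finite ι] {F G : ι → ι → ℝ}
    (h : ∀ i j, i ≠ j → ∃ k l, k ≠ l ∧ F i j ≤ G k l) : offDiagSup F ≤ offDiagSup G := by
  classical
  cases nonempty_fintype ι
  rcases subsingleton_or_nontrivial ι with hι | hι
  · simp only [offDiagSup_of_subsingleton, le_refl]
  have hne := univ_offDiag_nonempty (α := ι)
  rw [offDiagSup_eq_sup' F hne, offDiagSup_eq_sup' G hne]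
  refine sup'_le _ _ fun p hp => ?_
  obtain ⟨k, l, hkl, hle⟩ := h p.1 p.2 (mem_offDiag.1 hp).2.2
  exact le_sup'_of_le (fun p => G p.1 p.2) (b := (k, l))
    (mem_offDiag.2 ⟨mem_univ k, mem_univ l, hkl⟩) hle

theorem continuous_offDiagSup [Finite ι] {X : Type*} [TopologicalSpace X] {F : X → ι → ι → ℝ}
    (hF : ∀ i j, Continuous fun x => F x i j) : Continuous fun x => offDiagSup (F x) := by
  classical
  cases nonempty_fintype ι
  rcases subsingleton_or_nontrivial ι with hι | hι
  · simp only [offDiagSup_of_subsingleton]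
    exact continuous_const
  have hne := univ_offDiag_nonempty (α := ι)
  simp only [offDiagSup_eq_sup' _ hne]
  exact Continuous.finset_sup'_apply hne fun p _ => hF p.1 p.2

theorem offDiagSup_comp_perm_le [LinearOrder ι] [Finite ι] {a b q : ι → ℝ}
    (ha : Monotone a) (hb : Monotone b) (ha0 : 0 ≤ a) (hb0 : 0 ≤ b) (hq : 0 ≤ q)
    {σ : Equiv.Perm ι} (hσ : Antitone (q ∘ σ)) :
    offDiagSup (fun i j => q (σ i) * a i - q (σ j) * b j)
      ≤ offDiagSup (fun i j => q i * a i - q j * b j) := by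
  have := Fintype.ofFinite ι
  refine offDiagSup_le_offDiagSup fun i j hij => ?_
  obtain ⟨m₁, hm₁i, hiσm₁⟩ := σ.exists_le_le_apply i
  obtain ⟨m₂, hjm₂, hσm₂j⟩ := σ.exists_le_apply_le j
  refine ⟨σ m₁, σ m₂, fun h => hij ?_, ?_⟩
  · have hm : m₁ = m₂ := σ.injective h
    exact le_antisymm (hiσm₁.trans (h ▸ hσm₂j)) (hjm₂.trans (hm ▸ hm₁i))
  · have h₁ : q (σ i) * a i ≤ q (σ m₁) * a (σ m₁) :=
      mul_le_mul (hσ hm₁i) (ha hiσm₁) (ha0 i) (hq _)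
    have h₂ : q (σ m₂) * b (σ m₂) ≤ q (σ j) * b j :=
      mul_le_mul (hσ hjm₂) (hb hσm₂j) (hb0 _) (hq _)
    linarith

end offDiagSup

theorem exists_perm_antitone_comp {n : ℕ} {α : Type*} [LinearOrder α] (q : Fin n → α) :
    ∃ σ : Equiv.Perm (Fin n), Antitone (q ∘ σ) :=
  ⟨Tuple.sort (OrderDual.toDual ∘ q), monotone_toDual_comp_iff.1 (Tuple.monotone_sort _)⟩

theorem simplex_eq_stdSimplex (d : ℕ) : simplex d = stdSimplex ℝ (Fin d) := rfl

theorem comp_perm_mem_simplex {d : ℕ} {q : Fin d → ℝ} (hq : q ∈ simplex d)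
    (σ : Equiv.Perm (Fin d)) : q ∘ σ ∈ simplex d :=
  ⟨fun i => hq.1 (σ i), (Equiv.sum_comp σ q).trans hq.2⟩

section Phi

variable {d : ℕ} {f : ℝ → ℝ} {phat : Fin d → ℝ} {ε : ℝ}

theorem Phi_eq_neg_sum_add_offDiagSup (q : Fin d → ℝ) :
    Phi f phat ε q = -(∑ i, q i * f (phat i))
      + offDiagSup fun i j => q i * (f (phat i) - f (phat i - ε))
          - q j * (f (phat j + ε) - f (phat j)) :=
  rfl

theorem continuous_Phi (f : ℝ → ℝ) (phat : Fin d → ℝ) (ε : ℝ) : Continuous (Phi f phat ε) := by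
  simp only [funext Phi_eq_neg_sum_add_offDiagSup]
  exact (continuous_finsetSum _ fun i _ => (continuous_apply i).mul continuous_const).neg.add
    (continuous_offDiagSup fun i j => ((continuous_apply i).mul continuous_const).sub
      ((continuous_apply j).mul continuous_const))

theorem Phi_comp_perm_le (hmono : MonotoneOn f (Set.Ioi 0))
    (hconc : ConcaveOn ℝ (Set.Ioi 0) f) (hphat : Antitone phat) (hε : 0 < ε)
    (hεp : ∀ i, ε < phat i) {q : Fin d → ℝ} (hq : 0 ≤ q) {σ : Equiv.Perm (Fin d)}
    (hσ : Antitone (q ∘ σ)) : Phi f phat ε (q ∘ σ) ≤ Phi f phat ε q := by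
  have hpos (i : Fin d) : (0 : ℝ) < phat i := hε.trans (hεp i)
  have hsub (i : Fin d) : (0 : ℝ) < phat i - ε := sub_pos.2 (hεp i)
  have hadd (i : Fin d) : (0 : ℝ) < phat i + ε := add_pos (hpos i) hε
  rw [Phi_eq_neg_sum_add_offDiagSup, Phi_eq_neg_sum_add_offDiagSup]
  refine add_le_add (neg_le_neg ?_) ?_
  · have hmv : Monovary (q ∘ σ) (fun i => f (phat i)) := fun i j hij =>
      hσ (not_le.1 fun hji => hij.not_ge (hmono (hpos j) (hpos i) (hphat hji))).le
    calc ∑ i, q i * f (phat i) = ∑ i, (q ∘ σ) i * f (phat (σ i)) :=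
          (Equiv.sum_comp σ fun i => q i * f (phat i)).symm
      _ ≤ ∑ i, (q ∘ σ) i * f (phat i) := hmv.sum_mul_comp_perm_le_sum_mul
  · refine offDiagSup_comp_perm_le (fun i j hij => ?_) (fun i j hij => ?_)
      (fun i => sub_nonneg.2 (hmono (hsub i) (hpos i) (by linarith)))
      (fun i => sub_nonneg.2 (hmono (hpos i) (hadd i) (by linarith))) hq hσ
    · have := hconc.add_sub_le_add_sub_of_le (hsub j) (by simpa using hpos i)
        (sub_le_sub_right (hphat hij) ε) hε.le
      simpa only [sub_add_cancel] using this
    · exact hconc.add_sub_le_add_sub_of_le (hpos j) (hadd i) (hphat hij) hε.le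

end Phi

/-- rearranging `q` in decreasing order does not increase `Φ`;
consequently `Φ` admits a decreasing minimizer on the simplex. -/
theorem stmt9 {d : ℕ} (hd : 0 < d) (f : ℝ → ℝ)
    (hmono : MonotoneOn f (Set.Ioi 0))
    (hconc : ConcaveOn ℝ (Set.Ioi 0) f)
    (phat : Fin d → ℝ)
    (hsort : ∀ i j : Fin d, i ≤ j → phat j ≤ phat i)
    (ε : ℝ) (hε : 0 < ε) (hεd : ε < phat ⟨d - 1, by omega⟩) :
    (∀ q ∈ simplex d, ∀ σ : Equiv.Perm (Fin d),
        (∀ i j : Fin d, i ≤ j → q (σ j) ≤ q (σ i)) →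
        Phi f phat ε (q ∘ σ) ≤ Phi f phat ε q)
    ∧ ∃ qs ∈ simplex d, (∀ i j : Fin d, i ≤ j → qs j ≤ qs i)
        ∧ ∀ q ∈ simplex d, Phi f phat ε qs ≤ Phi f phat ε q := by
  have hεp (i : Fin d) : ε < phat i :=
    hεd.trans_le (hsort _ _ (Fin.le_iff_val_le_val.2 (by simp only; omega)))
  have hrearr : ∀ q ∈ simplex d, ∀ σ : Equiv.Perm (Fin d),
      (∀ i j : Fin d, i ≤ j → q (σ j) ≤ q (σ i)) → Phi f phat ε (q ∘ σ) ≤ Phi f phat ε q :=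
    fun q hq σ hσ => Phi_comp_perm_le hmono hconc (fun i j h => hsort i j h) hε hεp hq.1
      (fun i j h => hσ i j h)
  refine ⟨hrearr, ?_⟩
  have hcompact : IsCompact (simplex d) := by
    rw [simplex_eq_stdSimplex]; exact isCompact_stdSimplex ℝ (Fin d)
  have hne : (simplex d).Nonempty := by
    rw [simplex_eq_stdSimplex]; exact ⟨_, single_mem_stdSimplex ℝ ⟨0, hd⟩⟩
  obtain ⟨qm, hqm, hmin⟩ := hcompact.exists_isMinOn hne (continuous_Phi f phat ε).continuousOn
  obtain ⟨σ, hσ⟩ := exists_perm_antitone_comp qm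
  exact ⟨qm ∘ σ, comp_perm_mem_simplex hqm σ, fun i j h => hσ h,
    fun q hq => (hrearr qm hqm σ fun i j h => hσ h).trans (hmin hq)⟩
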